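/- arXiv:1608.05863 — 4 statements merged into one kernel-verified Lean document; each statement's English description precedes it below -/
import Mathlib

section
/- Let K be a field of characteristic 2 and let s be the 3-dimensional K-vector space with basis e₋₁, e₀, e₁ endowed with the bilinear bracket determined by [e₋₁,e₀] = e₋₁, [e₋₁,e₁] = e₀, [e₀,e₁] = e₁ (and [x,x] = 0 for all x). Then s is a Lie algebra and it is simple, i.e., s is not abelian and its only Lie ideals are 0 and s. -/
def sBracket (K : Type*) [Field K] (x y : Fin 3 → K) : Fin 3 → K :=
  ![x 0 * y 1 - x 1 * y 0, x 0 * y 2 - x 2 * y 0, x 1 * y 2 - x 2 * y 1]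

section
variable {K : Type*} [Field K]
set_option linter.unusedSectionVars false
variable [CharP K 2]

lemma brE0 (v : Fin 3 → K) : sBracket K ![1,0,0] v = ![v 1, v 2, 0] := by
  funext i; fin_cases i <;> simp [sBracket]

lemma brE2 (v : Fin 3 → K) : sBracket K ![0,0,1] v = ![0, v 0, v 1] := by
  funext i; fin_cases i <;> simp [sBracket, CharTwo.neg_eq]

end

/-- Over a field of characteristic 2, the algebra `s` is a Lie algebra (the bracket is
alternating and satisfies the Jacobi identity), and it is simple: it is not abelian, and its
only Lie ideals are `0` and `s`. -/
theorem s_is_simple_lie_algebra (K : Type*) [Field K] [CharP K 2] :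
    (∀ x : Fin 3 → K, sBracket K x x = 0) ∧
    (∀ x y z : Fin 3 → K,
      sBracket K (sBracket K x y) z + sBracket K (sBracket K y z) x
        + sBracket K (sBracket K z x) y = 0) ∧
    (¬ ∀ x y : Fin 3 → K, sBracket K x y = 0) ∧
    (∀ I : Submodule K (Fin 3 → K),
      (∀ x y : Fin 3 → K, y ∈ I → sBracket K x y ∈ I) → I = ⊥ ∨ I = ⊤) := by
  have h2 : (2 : K) = 0 := by exact_mod_cast CharP.cast_eq_zero K 2
  refine ⟨?_, ?_, ?_, ?_⟩
  · intro x; funext i; fin_cases i <;> simp [sBracket] <;> ring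
  · intro x y z; funext i; fin_cases i <;> simp [sBracket] <;> ring
  · intro h
    have := congrFun (h ![1,0,0] ![0,1,0]) 0
    simp [sBracket] at this
  · intro I hI
    rcases eq_or_ne I ⊥ with hb | hb
    · exact Or.inl hb
    right
    obtain ⟨v, hv, hv0⟩ := Submodule.exists_mem_ne_zero_of_ne_bot hb
    -- key: if a basis vector of form e0 or e2 is in I, then I = ⊤
    have top_of_e0 : (![1,0,0] : Fin 3 → K) ∈ I → I = ⊤ := by
      intro h0
      have h1 : (![0,1,0] : Fin 3 → K) ∈ I := by
        have := hI ![0,0,1] _ h0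
        rwa [brE2] at this
      have h2' : (![0,0,1] : Fin 3 → K) ∈ I := by
        have := hI ![0,0,1] _ h1
        rwa [brE2] at this
      rw [eq_top_iff]
      intro x _
      have hx : x = x 0 • ![1,0,0] + x 1 • ![0,1,0] + x 2 • ![0,0,1] := by
        funext i; fin_cases i <;> simp
      rw [hx]
      exact add_mem (add_mem (I.smul_mem _ h0) (I.smul_mem _ h1)) (I.smul_mem _ h2')
    have top_of_e2 : (![0,0,1] : Fin 3 → K) ∈ I → I = ⊤ := by
      intro h0
      apply top_of_e0
      have h1 : (![0,1,0] : Fin 3 → K) ∈ I := by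
        have := hI ![1,0,0] _ h0
        rwa [brE0] at this
      have := hI ![1,0,0] _ h1
      rwa [brE0] at this
    -- brackets of v
    have w1 : (![v 1, v 2, 0] : Fin 3 → K) ∈ I := by
      have := hI ![1,0,0] v hv; rwa [brE0] at this
    have w2 : (![v 2, 0, 0] : Fin 3 → K) ∈ I := by
      have := hI ![1,0,0] _ w1; rwa [brE0] at this
    have u1 : (![0, v 0, v 1] : Fin 3 → K) ∈ I := by
      have := hI ![0,0,1] v hv; rwa [brE2] at this
    have u2 : (![0, 0, v 0] : Fin 3 → K) ∈ I := by
      have := hI ![0,0,1] _ u1; rwa [brE2] at this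
    have m1 : (![v 0, v 1, 0] : Fin 3 → K) ∈ I := by
      have := hI ![1,0,0] _ u1; rwa [brE0] at this
    have m2 : (![v 1, 0, 0] : Fin 3 → K) ∈ I := by
      have := hI ![1,0,0] _ m1; rwa [brE0] at this
    rcases eq_or_ne (v 2) 0 with h2z | h2n
    · rcases eq_or_ne (v 1) 0 with h1z | h1n
      · rcases eq_or_ne (v 0) 0 with h0z | h0n
        · exact absurd (by funext i; fin_cases i <;> simp [h0z, h1z, h2z]) hv0
        · apply top_of_e2
          have : (![0,0,1] : Fin 3 → K) = (v 0)⁻¹ • ![0, 0, v 0] := by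
            funext i; fin_cases i <;> simp [inv_mul_cancel₀ h0n]
          rw [this]; exact I.smul_mem _ u2
      · apply top_of_e0
        have : (![1,0,0] : Fin 3 → K) = (v 1)⁻¹ • ![v 1, 0, 0] := by
          funext i; fin_cases i <;> simp [inv_mul_cancel₀ h1n]
        rw [this]; exact I.smul_mem _ m2
    · apply top_of_e0
      have : (![1,0,0] : Fin 3 → K) = (v 2)⁻¹ • ![v 2, 0, 0] := by
        funext i; fin_cases i <;> simp [inv_mul_cancel₀ h2n]
      rw [this]; exact I.smul_mem _ w2
end

section
/- Let K be a field of characteristic 2 and let L be the 5-dimensional K-vector space with basis f₋₁, e₋₁, e₀, e₁, f₁ and bilinear bracket determined by [e₋₁,e₀] = e₋₁, [e₋₁,e₁] = e₀, [e₀,e₁] = e₁, [f₋₁,e₁] = e₋₁, [f₁,e₋₁] = e₁, [f₋₁,f₁] = e₀, with all other brackets of basis vectors equal to 0 and [x,x] = 0 for all x. Then: (1) this bracket satisfies the Jacobi identity, so L is a Lie algebra; (2) the 2-dimensional subspace N spanned by e₀ + e₋₁ + f₋₁ and e₀ + e₁ + f₁ is an abelian Lie subalgebra; (3) the 3-dimensional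 subspace M spanned by f₋₁, e₀, f₁ is a nilpotent Lie subalgebra; (4) L = N ⊕ M as a direct sum of vector spaces; (5) L is not solvable. -/
/-- The bracket of the 5-dimensional 2-envelope of the 3-dimensional simple characteristic-2
analog of `sl₂`, on `Fin 5 → K` with basis `f₋₁, e₋₁, e₀, e₁, f₁` corresponding to coordinates
`0, 1, 2, 3, 4`: it is the bilinear bracket determined by `[e₋₁,e₀] = e₋₁`, `[e₋₁,e₁] = e₀`,
`[e₀,e₁] = e₁`, `[f₋₁,e₁] = e₋₁`, `[f₁,e₋₁] = e₁`, `[f₋₁,f₁] = e₀`, all other brackets of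
basis vectors being `0`, and `[x,x] = 0`. -/
def pBracket (K : Type*) [Field K] (x y : Fin 5 → K) : Fin 5 → K :=
  ![0,
    (x 1 * y 2 - x 2 * y 1) + (x 0 * y 3 - x 3 * y 0),
    (x 1 * y 3 - x 3 * y 1) + (x 0 * y 4 - x 4 * y 0),
    (x 2 * y 3 - x 3 * y 2) + (x 4 * y 1 - x 1 * y 4),
    0]

/-- The span of all brackets `b x y` with `x ∈ P`, `y ∈ Q`. -/
def bracketSpan (K V : Type*) [Field K] [AddCommGroup V] [Module K V]
    (b : V → V → V) (P Q : Submodule K V) : Submodule K V :=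
  Submodule.span K {z | ∃ x ∈ P, ∃ y ∈ Q, z = b x y}

/-- The lower central series of a subspace `M` with respect to a bracket `b`. -/
def lcSeries (K V : Type*) [Field K] [AddCommGroup V] [Module K V]
    (b : V → V → V) (M : Submodule K V) : ℕ → Submodule K V
  | 0 => M
  | k + 1 => bracketSpan K V b M (lcSeries K V b M k)

/-- The derived series of a subspace `M` with respect to a bracket `b`. -/
def derSeries (K V : Type*) [Field K] [AddCommGroup V] [Module K V]
    (b : V → V → V) (M : Submodule K V) : ℕ → Submodule K V
  | 0 => M
  | k + 1 => bracketSpan K V b (derSeries K V b M k) (derSeries K V b M k)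

/-- Petravchuk's example: over a field of characteristic 2, the 5-dimensional algebra `L`
with the bracket `pBracket` (1) is a Lie algebra; (2) the 2-dimensional subspace `N` spanned
by `e₀ + e₋₁ + f₋₁` and `e₀ + e₁ + f₁` is an abelian subalgebra; (3) the 3-dimensional
subspace `M` spanned by `f₋₁, e₀, f₁` is a nilpotent subalgebra; (4) `L = N ⊕ M` as vector
spaces; (5) `L` is not solvable. -/
theorem petravchuk_example (K : Type*) [Field K] [CharP K 2] :
    -- (1) `pBracket` is alternating and satisfies the Jacobi identity
    (∀ x : Fin 5 → K, pBracket K x x = 0) ∧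
    (∀ x y z : Fin 5 → K,
      pBracket K (pBracket K x y) z + pBracket K (pBracket K y z) x
        + pBracket K (pBracket K z x) y = 0) ∧
    -- (2) N is an abelian subalgebra
    (∀ x ∈ Submodule.span K {(![1, 1, 1, 0, 0] : Fin 5 → K), ![0, 0, 1, 1, 1]},
     ∀ y ∈ Submodule.span K {(![1, 1, 1, 0, 0] : Fin 5 → K), ![0, 0, 1, 1, 1]},
      pBracket K x y = 0) ∧
    -- (3) M is a nilpotent subalgebra
    (∀ x ∈ Submodule.span K {(![1, 0, 0, 0, 0] : Fin 5 → K), ![0, 0, 1, 0, 0], ![0, 0, 0, 0, 1]},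
     ∀ y ∈ Submodule.span K {(![1, 0, 0, 0, 0] : Fin 5 → K), ![0, 0, 1, 0, 0], ![0, 0, 0, 0, 1]},
      pBracket K x y ∈
        Submodule.span K {(![1, 0, 0, 0, 0] : Fin 5 → K), ![0, 0, 1, 0, 0], ![0, 0, 0, 0, 1]}) ∧
    (∃ k : ℕ, lcSeries K (Fin 5 → K) (pBracket K)
      (Submodule.span K {(![1, 0, 0, 0, 0] : Fin 5 → K), ![0, 0, 1, 0, 0], ![0, 0, 0, 0, 1]})
        k = ⊥) ∧
    -- (4) L = N ⊕ M
    (Submodule.span K {(![1, 1, 1, 0, 0] : Fin 5 → K), ![0, 0, 1, 1, 1]} ⊓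
      Submodule.span K {(![1, 0, 0, 0, 0] : Fin 5 → K), ![0, 0, 1, 0, 0], ![0, 0, 0, 0, 1]}
        = ⊥) ∧
    (Submodule.span K {(![1, 1, 1, 0, 0] : Fin 5 → K), ![0, 0, 1, 1, 1]} ⊔
      Submodule.span K {(![1, 0, 0, 0, 0] : Fin 5 → K), ![0, 0, 1, 0, 0], ![0, 0, 0, 0, 1]}
        = ⊤) ∧
    -- (5) L is not solvable
    ¬ ∃ k : ℕ, derSeries K (Fin 5 → K) (pBracket K) ⊤ k = ⊥ := by
  have h2 : (2 : K) = 0 := by exact_mod_cast CharP.cast_eq_zero K 2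
  refine ⟨?_, ?_, ?_, ?_, ?_, ?_, ?_, ?_⟩
  · -- (1a) alternating
    intro x
    funext i; fin_cases i <;> simp [pBracket] <;> ring
  · -- (1b) Jacobi
    intro x y z
    funext i; fin_cases i <;> simp [pBracket]
    · linear_combination ((-1)*x 4*y 1*z 0 + x 4*y 0*z 1 + x 3*y 2*z 0 + (-1)*x 3*y 0*z 2
        + (-1)*x 2*y 3*z 0 + x 2*y 0*z 3 + x 1*y 4*z 0 + (-1)*x 1*y 0*z 4 + (-1)*x 0*y 4*z 1
        + x 0*y 3*z 2 + (-1)*x 0*y 2*z 3 + x 0*y 1*z 4) * h2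
    · ring
    · linear_combination (x 4*y 3*z 0 + x 4*y 2*z 1 + (-1)*x 4*y 1*z 2 + (-1)*x 4*y 0*z 3
        + (-1)*x 3*y 4*z 0 + x 3*y 0*z 4 + (-1)*x 2*y 4*z 1 + x 2*y 1*z 4 + x 1*y 4*z 2
        + (-1)*x 1*y 2*z 4 + x 0*y 4*z 3 + (-1)*x 0*y 3*z 4) * h2
  · -- (2) N abelian
    intro x hx y hy
    obtain ⟨a, b, rfl⟩ := Submodule.mem_span_pair.mp hx
    obtain ⟨c, d, rfl⟩ := Submodule.mem_span_pair.mp hy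
    funext i; fin_cases i <;> simp [pBracket]
    · linear_combination (a * d - b * c) * h2
    · linear_combination (a * d - b * c) * h2
    · ring
  · -- (3a) M subalgebra
    intro x hx y hy
    obtain ⟨a, w, hw, rfl⟩ := Submodule.mem_span_insert.mp hx
    obtain ⟨b, c, rfl⟩ := Submodule.mem_span_pair.mp hw
    obtain ⟨a', w', hw', rfl⟩ := Submodule.mem_span_insert.mp hy
    obtain ⟨b', c', rfl⟩ := Submodule.mem_span_pair.mp hw'
    have : pBracket K (a • ![1,0,0,0,0] + (b • ![0,0,1,0,0] + c • ![0,0,0,0,1]))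
        (a' • ![1,0,0,0,0] + (b' • ![0,0,1,0,0] + c' • ![0,0,0,0,1]))
        = (a * c' - c * a') • (![0,0,1,0,0] : Fin 5 → K) := by
      funext i; fin_cases i <;> simp [pBracket] <;> ring
    rw [this]
    exact Submodule.smul_mem _ _ (Submodule.subset_span (by simp))
  · -- (3b) M nilpotent: lcSeries reaches ⊥ at step 2
    refine ⟨2, ?_⟩
    have h1 : lcSeries K (Fin 5 → K) (pBracket K)
        (Submodule.span K {(![1, 0, 0, 0, 0] : Fin 5 → K), ![0, 0, 1, 0, 0], ![0, 0, 0, 0, 1]}) 1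
        ≤ Submodule.span K {(![0, 0, 1, 0, 0] : Fin 5 → K)} := by
      show bracketSpan K _ _ _ _ ≤ _
      refine Submodule.span_le.mpr ?_
      rintro z ⟨x, hx, y, hy, rfl⟩
      obtain ⟨a, w, hw, rfl⟩ := Submodule.mem_span_insert.mp hx
      obtain ⟨b, c, rfl⟩ := Submodule.mem_span_pair.mp hw
      obtain ⟨a', w', hw', rfl⟩ := Submodule.mem_span_insert.mp hy
      obtain ⟨b', c', rfl⟩ := Submodule.mem_span_pair.mp hw'
      have : pBracket K (a • ![1,0,0,0,0] + (b • ![0,0,1,0,0] + c • ![0,0,0,0,1]))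
          (a' • ![1,0,0,0,0] + (b' • ![0,0,1,0,0] + c' • ![0,0,0,0,1]))
          = (a * c' - c * a') • (![0,0,1,0,0] : Fin 5 → K) := by
        funext i; fin_cases i <;> simp [pBracket] <;> ring
      rw [this]
      exact Submodule.smul_mem _ _ (Submodule.subset_span (by simp))
    show bracketSpan K _ _ _ _ = ⊥
    rw [eq_bot_iff]
    refine Submodule.span_le.mpr ?_
    rintro z ⟨x, hx, y, hy, rfl⟩
    obtain ⟨a, w, hw, rfl⟩ := Submodule.mem_span_insert.mp hx
    obtain ⟨b, c, rfl⟩ := Submodule.mem_span_pair.mp hw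
    obtain ⟨t, rfl⟩ := Submodule.mem_span_singleton.mp (h1 hy)
    have : pBracket K (a • ![1,0,0,0,0] + (b • ![0,0,1,0,0] + c • ![0,0,0,0,1]))
        (t • ![0,0,1,0,0]) = (0 : Fin 5 → K) := by
      funext i; fin_cases i <;> simp [pBracket] <;> ring
    simp only [SetLike.mem_coe]; rw [this]; exact Submodule.zero_mem _
  · -- (4a) N ⊓ M = ⊥
    rw [eq_bot_iff]
    rintro x ⟨hN, hM⟩
    obtain ⟨a, b, rfl⟩ := Submodule.mem_span_pair.mp hN
    obtain ⟨a', w, hw, hx⟩ := Submodule.mem_span_insert.mp hM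
    obtain ⟨b', c', rfl⟩ := Submodule.mem_span_pair.mp hw
    have h1 := congrFun hx 1
    have h3 := congrFun hx 3
    simp at h1 h3
    rw [h1, h3]; simp
  · -- (4b) N ⊔ M = ⊤
    rw [eq_top_iff]
    rintro x -
    have hx : x = x 1 • ![1,1,1,0,0] + x 3 • ![0,0,1,1,1]
        + ((x 0 - x 1) • ![1,0,0,0,0] + (x 2 - x 1 - x 3) • ![0,0,1,0,0]
          + (x 4 - x 3) • ![0,0,0,0,1]) := by
      funext i; fin_cases i <;> simp <;> ring
    rw [hx]
    refine Submodule.add_mem _ (Submodule.mem_sup_left ?_) (Submodule.mem_sup_right ?_)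
    · exact Submodule.add_mem _ (Submodule.smul_mem _ _ (Submodule.subset_span (by simp)))
        (Submodule.smul_mem _ _ (Submodule.subset_span (by simp)))
    · exact Submodule.add_mem _ (Submodule.add_mem _
        (Submodule.smul_mem _ _ (Submodule.subset_span (by simp)))
        (Submodule.smul_mem _ _ (Submodule.subset_span (by simp))))
        (Submodule.smul_mem _ _ (Submodule.subset_span (by simp)))
  · -- (5) not solvable
    have key : ∀ k : ℕ,
        Submodule.span K {(![0,1,0,0,0] : Fin 5 → K), ![0,0,1,0,0], ![0,0,0,1,0]}
          ≤ derSeries K (Fin 5 → K) (pBracket K) ⊤ k := by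
      intro k
      induction k with
      | zero => exact le_top
      | succ k ih =>
        refine Submodule.span_le.mpr ?_
        have m1 : (![0,1,0,0,0] : Fin 5 → K) ∈ derSeries K (Fin 5 → K) (pBracket K) ⊤ k :=
          ih (Submodule.subset_span (by simp))
        have m2 : (![0,0,1,0,0] : Fin 5 → K) ∈ derSeries K (Fin 5 → K) (pBracket K) ⊤ k :=
          ih (Submodule.subset_span (by simp))
        have m3 : (![0,0,0,1,0] : Fin 5 → K) ∈ derSeries K (Fin 5 → K) (pBracket K) ⊤ k :=
          ih (Submodule.subset_span (by simp))
        rintro z (rfl | rfl | rfl)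
        · exact Submodule.subset_span ⟨_, m1, _, m2, by funext i; fin_cases i <;> simp [pBracket]⟩
        · exact Submodule.subset_span ⟨_, m1, _, m3, by funext i; fin_cases i <;> simp [pBracket]⟩
        · exact Submodule.subset_span ⟨_, m2, _, m3, by funext i; fin_cases i <;> simp [pBracket]⟩
    rintro ⟨k, hk⟩
    have := key k (Submodule.subset_span (show (![0,1,0,0,0] : Fin 5 → K) ∈ _ by simp))
    rw [hk] at this
    have h := congrFun (Submodule.mem_bot K |>.mp this) 1
    simp at h
end

section
/- Let K be a field of characteristic 2 and n ≥ 2 an integer. The Zassenhaus algebra W₁′(n) over K is a simple Lie algebra: it is not abelian and its only Lie ideals are 0 and the whole algebra. -/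
open scoped BigOperators

/-- The bracket of the Zassenhaus algebra `W₁′(n)` in characteristic 2, on the
`(2ⁿ - 1)`-dimensional space `Fin (2^n - 1) → K`.  The coordinate `a : Fin (2^n - 1)`
corresponds to the basis vector `e_i` with `i = a - 1` (so `i` ranges over
`-1 ≤ i ≤ 2^n - 3`), and the bracket is the bilinear extension of
`[e_i, e_j] = C(i+j+2, i+1) e_{i+j}` if `-1 ≤ i+j ≤ 2^n - 3`, and `0` otherwise,
the binomial coefficient being taken in `K` (i.e. reduced mod 2 when `char K = 2`). -/
def zassBracket (K : Type*) [Field K] (n : ℕ) (x y : Fin (2 ^ n - 1) → K) :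
    Fin (2 ^ n - 1) → K :=
  fun k => ∑ a : Fin (2 ^ n - 1), ∑ b : Fin (2 ^ n - 1),
    (if (a : ℕ) + (b : ℕ) = (k : ℕ) + 1 then (Nat.choose ((k : ℕ) + 1) (a : ℕ) : K) else 0)
      * x a * y b

section aux
variable {K : Type*} [Field K]

lemma sum_if_coe {N : ℕ} (m : ℕ) (f : Fin N → K) :
    ∑ b : Fin N, (if (b : ℕ) = m then f b else 0) = if h : m < N then f ⟨m, h⟩ else 0 := by
  split_ifs with h
  · rw [Finset.sum_eq_single (⟨m, h⟩ : Fin N)]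
    · simp
    · intro b _ hb
      exact if_neg fun hc => hb (Fin.ext hc)
    · simp
  · exact Finset.sum_eq_zero fun b _ => if_neg (by have := b.isLt; omega)

lemma zb_single_left (n : ℕ) (i : Fin (2^n-1)) (y : Fin (2^n-1) → K) (k : Fin (2^n-1)) :
    zassBracket K n (Pi.single i 1) y k =
      ∑ b : Fin (2^n-1),
        (if (i:ℕ) + (b:ℕ) = (k:ℕ)+1 then (Nat.choose ((k:ℕ)+1) (i:ℕ) : K) else 0) * y b := by
  unfold zassBracket
  rw [Finset.sum_eq_single i]
  · apply Finset.sum_congr rfl; intro b _; rw [Pi.single_eq_same, mul_one]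
  · intro a _ ha; apply Finset.sum_eq_zero; intro b _
    rw [Pi.single_eq_of_ne ha, mul_zero, zero_mul]
  · simp

lemma zb_delta0 (n : ℕ) (h0 : 0 < 2^n - 1) (y : Fin (2^n-1) → K) (k : Fin (2^n-1)) :
    zassBracket K n (Pi.single (⟨0, h0⟩ : Fin (2^n-1)) 1) y k =
      if h : (k:ℕ)+1 < 2^n-1 then y ⟨(k:ℕ)+1, h⟩ else 0 := by
  rw [zb_single_left]
  have key : ∀ b : Fin (2^n-1),
      (if ((⟨0,h0⟩ : Fin (2^n-1)):ℕ) + (b:ℕ) = (k:ℕ)+1 then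
        (Nat.choose ((k:ℕ)+1) ((⟨0,h0⟩ : Fin (2^n-1)):ℕ) : K) else 0) * y b
      = if (b:ℕ) = (k:ℕ)+1 then y b else 0 := by
    intro b
    by_cases h : (b:ℕ) = (k:ℕ)+1 <;> simp [h]
  rw [Finset.sum_congr rfl (fun b _ => key b), sum_if_coe]

lemma zb_single_single (n : ℕ) (i j : Fin (2^n-1)) (k : Fin (2^n-1)) :
    zassBracket K n (Pi.single i 1) (Pi.single j 1) k =
      if (i:ℕ)+(j:ℕ) = (k:ℕ)+1 then (Nat.choose ((k:ℕ)+1) (i:ℕ) : K) else 0 := by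
  rw [zb_single_left, Finset.sum_eq_single j]
  · rw [Pi.single_eq_same, mul_one]
  · intro b _ hb; rw [Pi.single_eq_of_ne hb, mul_zero]
  · simp

lemma zb_step_down (n : ℕ) (h0 : 0 < 2^n-1) (i j : Fin (2^n-1)) (hij : (j:ℕ)+1 = (i:ℕ)) :
    zassBracket K n (Pi.single i 1) (Pi.single (⟨0,h0⟩ : Fin (2^n-1)) 1) = Pi.single j 1 := by
  funext k
  rw [zb_single_single]
  by_cases hk : k = j
  · subst hk
    rw [if_pos (by simp; omega), Pi.single_eq_same]
    have h2 : (k:ℕ)+1 = (i:ℕ) := hij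
    rw [h2, Nat.choose_self, Nat.cast_one]
  · rw [if_neg (by simp; intro h; exact hk (Fin.ext (by omega))),
      Pi.single_eq_of_ne hk]

lemma mem_single0 {N : ℕ} (I : Submodule K (Fin N → K)) (h0 : 0 < N)
    (y : Fin N → K) (hyI : y ∈ I) (hy0 : y ≠ 0)
    (hsupp : ∀ j : Fin N, 0 < (j:ℕ) → y j = 0) :
    Pi.single (⟨0,h0⟩ : Fin N) 1 ∈ I := by
  have hpos : ∀ j : Fin N, j ≠ ⟨0,h0⟩ → 0 < (j:ℕ) := by
    intro j hj
    rcases Nat.eq_zero_or_pos (j:ℕ) with h | h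
    · exact absurd (Fin.ext h) hj
    · exact h
  have h00 : y ⟨0,h0⟩ ≠ 0 := by
    intro h
    apply hy0
    funext j
    by_cases hj : j = ⟨0,h0⟩
    · subst hj; exact h
    · exact hsupp j (hpos j hj)
  have hs : (y ⟨0,h0⟩)⁻¹ • y = (Pi.single (⟨0,h0⟩ : Fin N) 1 : Fin N → K) := by
    funext j
    by_cases hj : j = ⟨0,h0⟩
    · subst hj
      rw [Pi.smul_apply, smul_eq_mul, inv_mul_cancel₀ h00, Pi.single_eq_same]
    · rw [Pi.smul_apply, hsupp j (hpos j hj), smul_zero, Pi.single_eq_of_ne hj]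
  rw [← hs]
  exact I.smul_mem _ hyI

end aux

/-- Over a field of characteristic 2 and for `n ≥ 2`, the Zassenhaus algebra `W₁′(n)` is
simple: it is not abelian, and its only Lie ideals are `0` and the whole algebra. -/
theorem zassenhaus_is_simple (K : Type*) [Field K] [CharP K 2] (n : ℕ) (hn : 2 ≤ n) :
    (¬ ∀ x y : Fin (2 ^ n - 1) → K, zassBracket K n x y = 0) ∧
    (∀ I : Submodule K (Fin (2 ^ n - 1) → K),
      (∀ x y : Fin (2 ^ n - 1) → K, y ∈ I → zassBracket K n x y ∈ I) → I = ⊥ ∨ I = ⊤) := by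
  have hpow : 2^n = 2 * 2^(n-1) := by
    conv_lhs => rw [show n = (n-1)+1 by omega]
    rw [pow_succ]; ring
  have hpow2 : 2^(n-1) = 2 * 2^(n-2) := by
    conv_lhs => rw [show n-1 = (n-2)+1 by omega]
    rw [pow_succ]; ring
  have hm3 : 1 ≤ 2^(n-2) := Nat.one_le_two_pow
  have hm2 : 2 ≤ 2^(n-1) := by
    have : (2:ℕ)^1 ≤ 2^(n-1) := Nat.pow_le_pow_right (by norm_num) (by omega)
    simpa using this
  have hN3 : 3 ≤ 2^n - 1 := by omega
  have h0 : 0 < 2^n - 1 := by omega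
  have h1 : 1 < 2^n - 1 := by omega
  have h2 : 2 < 2^n - 1 := by omega
  constructor
  · intro h
    have := congrFun (h (Pi.single ⟨0,h0⟩ 1) (Pi.single ⟨1,h1⟩ 1)) ⟨0,h0⟩
    rw [zb_single_single] at this
    simp at this
  · intro I hI
    by_cases hbot : I = ⊥
    · exact Or.inl hbot
    right
    obtain ⟨y₀, hy₀I, hy₀⟩ := (Submodule.ne_bot_iff I).mp hbot
    -- Step 1 : Pi.single 0 1 ∈ I
    have key : Pi.single (⟨0,h0⟩ : Fin (2^n-1)) 1 ∈ I := by
      have main : ∀ m : ℕ, ∀ y : Fin (2^n-1) → K, y ∈ I → y ≠ 0 →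
          (∀ j : Fin (2^n-1), m < (j:ℕ) → y j = 0) →
          Pi.single (⟨0,h0⟩ : Fin (2^n-1)) 1 ∈ I := by
        intro m
        induction m with
        | zero => intro y hyI hy0 hsupp; exact mem_single0 I h0 y hyI hy0 hsupp
        | succ m ih =>
          intro y hyI hy0 hsupp
          by_cases hall : ∀ j : Fin (2^n-1), 0 < (j:ℕ) → y j = 0
          · exact mem_single0 I h0 y hyI hy0 hall
          · push_neg at hall
            obtain ⟨j, hj0, hjne⟩ := hall
            refine ih (zassBracket K n (Pi.single ⟨0,h0⟩ 1) y) (hI _ y hyI) ?_ ?_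
            · intro h
              have hjl : (j:ℕ) - 1 < 2^n - 1 := by have := j.isLt; omega
              have hc := congrFun h ⟨(j:ℕ)-1, hjl⟩
              rw [zb_delta0] at hc
              have hlt : ((⟨(j:ℕ)-1, hjl⟩ : Fin (2^n-1)):ℕ)+1 < 2^n-1 := by
                have := j.isLt; simp; omega
              rw [dif_pos hlt] at hc
              have hje : (⟨((⟨(j:ℕ)-1, hjl⟩ : Fin (2^n-1)):ℕ)+1, hlt⟩ : Fin (2^n-1)) = j :=
                Fin.ext (by simp; omega)
              rw [hje] at hc
              exact hjne hc
            · intro j' hj'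
              rw [zb_delta0]
              split_ifs with h
              · exact hsupp _ (by simp; omega)
              · rfl
      exact main (2^n) y₀ hy₀I hy₀ (fun j hj => absurd j.isLt (by omega))
    -- Step 2 : all singles below the top are in I
    have hlow : ∀ j : Fin (2^n-1), (j:ℕ) < 2^n-1-1 → Pi.single j 1 ∈ I := by
      intro j hj
      have hlt : (j:ℕ)+1 < 2^n-1 := by omega
      have := hI (Pi.single ⟨(j:ℕ)+1, hlt⟩ 1) _ key
      rwa [zb_step_down n h0 ⟨(j:ℕ)+1, hlt⟩ j rfl] at this
    -- The binomial coefficient C(2^n-1, 2) is odd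
    have hc : Nat.choose (2^n-1) 2 = (2^n-1) * (2^(n-1)-1) := by
      rw [Nat.choose_two_right]
      have he : (2^n - 1) - 1 = 2 * (2^(n-1) - 1) := by omega
      rw [he, show (2^n-1) * (2*(2^(n-1)-1)) = ((2^n-1)*(2^(n-1)-1))*2 by ring,
        Nat.mul_div_cancel _ two_pos]
    have hodd : ¬ (2 ∣ Nat.choose (2^n-1) 2) := by
      rw [hc]
      intro h
      rcases (Nat.Prime.dvd_mul Nat.prime_two).mp h with h | h <;> omega
    have hcK : ((Nat.choose (2^n-1) 2 : ℕ) : K) ≠ 0 := fun h =>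
      hodd ((CharP.cast_eq_zero_iff K 2 _).mp h)
    -- Step 3 : the top single is in I
    have hNlt : 2^n-1-1 < 2^n-1 := by omega
    have hN2lt : 2^n-1-2 < 2^n-1 := by omega
    have hmem2 : Pi.single (⟨2^n-1-2, hN2lt⟩ : Fin (2^n-1)) 1 ∈ I :=
      hlow _ (by simp; omega)
    have hb := hI (Pi.single ⟨2,h2⟩ 1) _ hmem2
    have hfun : zassBracket K n (Pi.single (⟨2,h2⟩ : Fin (2^n-1)) 1)
        (Pi.single (⟨2^n-1-2, hN2lt⟩ : Fin (2^n-1)) 1)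
        = ((Nat.choose (2^n-1) 2 : ℕ) : K) • (Pi.single (⟨2^n-1-1, hNlt⟩ : Fin (2^n-1)) 1 : Fin (2^n-1) → K) := by
      funext k
      rw [zb_single_single]
      by_cases hk : k = (⟨2^n-1-1, hNlt⟩ : Fin (2^n-1))
      · subst hk
        rw [if_pos (show (2:ℕ) + (2^n-1-2) = (2^n-1-1)+1 by omega)]
        have hkv : ((⟨2^n-1-1, hNlt⟩ : Fin (2^n-1)):ℕ)+1 = 2^n-1 := by
          show 2^n-1-1+1 = 2^n-1; omega
        rw [hkv]
        simp
      · have hcond : ¬ ((2:ℕ) + (2^n-1-2) = (k:ℕ)+1) := by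
          intro hcon
          have hcon' : (2:ℕ) + (2^n-1-2) = (k:ℕ)+1 := hcon
          exact hk (Fin.ext (show (k:ℕ) = 2^n-1-1 by omega))
        rw [if_neg hcond, Pi.smul_apply, Pi.single_eq_of_ne hk, smul_zero]
    rw [hfun] at hb
    have htop : Pi.single (⟨2^n-1-1, hNlt⟩ : Fin (2^n-1)) 1 ∈ I := by
      have := I.smul_mem ((Nat.choose (2^n-1) 2 : ℕ) : K)⁻¹ hb
      rwa [smul_smul, inv_mul_cancel₀ hcK, one_smul] at this
    have hsingle : ∀ j : Fin (2^n-1), Pi.single j 1 ∈ I := by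
      intro j
      by_cases hj : (j:ℕ) < 2^n-1-1
      · exact hlow j hj
      · have : j = (⟨2^n-1-1, hNlt⟩ : Fin (2^n-1)) :=
          Fin.ext (show (j:ℕ) = 2^n-1-1 by have := j.isLt; omega)
        rw [this]; exact htop
    rw [eq_top_iff]
    rintro x -
    have hx : x = ∑ j, Pi.single j (x j) := (Finset.univ_sum_single x).symm
    rw [hx]
    refine Submodule.sum_mem I fun j _ => ?_
    have : (Pi.single j (x j) : Fin (2^n-1) → K) = x j • (Pi.single j 1 : Fin (2^n-1) → K) := by
      rw [← Pi.single_smul, smul_eq_mul, mul_one]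
    rw [this]
    exact I.smul_mem _ (hsingle j)
end

section
/- Let K be a field of characteristic 2 and n ≥ 2 an integer, and let W = W₁′(n) be the Zassenhaus algebra over K. Then the second Chevalley–Eilenberg cohomology of W with trivial coefficients vanishes: for every alternating bilinear map f: W × W → K (i.e., f(x,x٫) = 0 for all x and f bilinear) satisfying the 2-cocycle identity f([x,y],z) + f([y,z],x) + f([z,x],y) = 0 for all x,y,z ∈ W, there exists a linear map g: W → K such that f(x,y) = g([x,y]) for all x,y ∈ W. -/
open scoped BigOperators

section ZassAux

lemma zval {N m : ℕ} (h : m < N) : ((⟨m, h⟩ : Fin N) : ℕ) = m := rfl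

/-- abstract "term" of the cocycle identity on basis elements -/
def zT {K : Type*} [Field K] (N : ℕ) (F : ℕ → ℕ → K) (x y z : ℕ) : K :=
  if 1 ≤ x + y ∧ x + y ≤ N then ((x + y).choose x : K) * F (x + y - 1) z else 0

variable {K : Type*} [Field K] [CharP K 2]

section Comb
variable {N : ℕ} {F : ℕ → ℕ → K}
variable (hsym : ∀ a b, F a b = F b a) (hdiag : ∀ a, F a a = 0)
  (hzN : ∀ a b, N ≤ b → F a b = 0)
  (hcoc : ∀ a b c, a < N → b < N → c < N →
    zT N F a b c + zT N F b c a + zT N F c a b = 0)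

section
include hcoc

lemma zchain (u s : ℕ) (hus : u < s) (hu : u + 1 < N) (hsu : s - u < N) :
    F u (s - u) + F (s - u - 1) (u + 1)
      + (if s + 1 ≤ N then (((s+1).choose (u+1) : K)) * F s 0 else 0) = 0 := by
  have h := hcoc 0 (u+1) (s-u) (by omega) hu hsu
  unfold zT at h
  have e1 : 0 + (u + 1) = u + 1 := by omega
  have e2 : u + 1 + (s - u) = s + 1 := by omega
  have e3 : s - u + 0 = s - u := by omega
  rw [e1, e2, e3] at h
  rw [if_pos (by omega : 1 ≤ u + 1 ∧ u + 1 ≤ N),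
      if_pos (by omega : 1 ≤ s - u ∧ s - u ≤ N)] at h
  simp only [show (1 ≤ s + 1 ∧ s + 1 ≤ N) ↔ (s + 1 ≤ N) from by omega] at h
  rw [show u + 1 - 1 = u from by omega, show s + 1 - 1 = s from by omega] at h
  simp only [Nat.choose_zero_right, Nat.choose_self, Nat.cast_one, one_mul] at h
  linear_combination h

end

section
include hsym hcoc

lemma zlemA (s : ℕ) (hsN : s < N) :
    ∀ u ≤ s, F u (s - u) = ((s.choose u : K)) * F s 0 := by
  intro u hu
  induction u with
  | zero =>
    simp only [Nat.sub_zero, Nat.choose_zero_right, Nat.cast_one, one_mul]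
    exact hsym 0 s
  | succ u ih =>
    have hus : u < s := by omega
    have hc := zchain hcoc u s hus (by omega) (by omega)
    rw [if_pos (by omega : s + 1 ≤ N)] at hc
    have ihu := ih (by omega)
    have hsub : s - u - 1 = s - (u + 1) := by omega
    have hsy : F (s - u - 1) (u + 1) = F (u + 1) (s - (u + 1)) := by
      rw [hsub, hsym]
    have hp : (((s+1).choose (u+1) : ℕ) : K) = (s.choose u : K) + (s.choose (u+1) : K) := by
      rw [Nat.choose_succ_succ]; push_cast; ring
    have h2 : (2 : K) = 0 := CharTwo.two_eq_zero
    linear_combination hc - ihu - hsy + (F s 0) * hp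
      - (((s+1).choose (u+1) : K) * F s 0) * h2

lemma zlemB : ∀ u, 1 ≤ u → u < N → F u (N - u) = F 1 (N - 1) := by
  intro u hu1 huN
  induction u with
  | zero => omega
  | succ u ih =>
    rcases Nat.eq_or_lt_of_le hu1 with h | h
    · have : u = 0 := by omega
      subst this; rfl
    · have hu : 1 ≤ u := by omega
      have hc := zchain hcoc u N (by omega) (by omega) (by omega)
      rw [if_neg (by omega)] at hc
      have h2 : (2 : K) = 0 := CharTwo.two_eq_zero
      have hstep : F (u + 1) (N - (u + 1)) = F u (N - u) := by
        rw [show N - (u+1) = N - u - 1 from by omega, hsym (u+1) (N - u - 1)]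
        linear_combination hc - (F u (N - u)) * h2
      rw [hstep, ih hu (by omega)]

lemma zlemCodd (a b : ℕ) (ha : a < N) (hb : b < N) (hab : N < a + b) (hodd : Odd (a + b)) :
    F a b = 0 := by
  have h := hcoc 1 a b (by omega) ha hb
  unfold zT at h
  rw [if_pos (by omega : 1 ≤ 1 + a ∧ 1 + a ≤ N), if_neg (by omega),
      if_pos (by omega : 1 ≤ b + 1 ∧ b + 1 ≤ N)] at h
  have e3 : (b+1).choose b = b + 1 := Nat.choose_succ_self_right b
  rw [show 1 + a - 1 = a from by omega, show b + 1 - 1 = b from by omega, e3,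
      Nat.choose_one_right, hsym b a] at h
  have h2 : (2 : K) = 0 := CharTwo.two_eq_zero
  have hcoef : ((1 + a : ℕ) : K) + ((b + 1 : ℕ) : K) = 1 := by
    obtain ⟨m, hm⟩ := hodd
    have hx : ((1 + a : ℕ) : K) + ((b + 1 : ℕ) : K) = ((a + b : ℕ) : K) + 2 := by
      push_cast; ring
    rw [hx, hm]; push_cast; rw [h2]; ring
  calc F a b = (((1 + a : ℕ) : K) + ((b + 1 : ℕ) : K)) * F a b := by rw [hcoef, one_mul]
  _ = ((1+a:ℕ):K) * F a b + ((b+1:ℕ):K) * F a b := by ring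
  _ = 0 := by linear_combination h

end

section
include hsym hdiag hzN hcoc

lemma zlemDeven (s : ℕ) (hNs : N < s) (heven : Even s)
    (a b : ℕ) (hab : a + b = s) (ha : a < N) (hb : b < N) : F a b = 0 := by
  obtain ⟨m, hm⟩ := heven
  have hmN : m ≤ N - 1 := by omega
  have key : ∀ k u, u + k = m → F u (s - u) = 0 := by
    intro k
    induction k with
    | zero =>
      intro u hu
      have : s - u = u := by omega
      rw [this]; exact hdiag u
    | succ k ih =>
      intro u hu
      by_cases hrange : N ≤ s - u
      · exact hzN _ _ hrange
      · push_neg at hrange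
        have hc := zchain hcoc u s (by omega) (by omega) hrange
        rw [if_neg (by omega)] at hc
        have h2 : (2 : K) = 0 := CharTwo.two_eq_zero
        have hstep : F u (s - u) = F (u + 1) (s - (u + 1)) := by
          rw [show s - (u+1) = s - u - 1 from by omega, hsym (u+1) (s - u - 1)]
          linear_combination hc - (F (s - u - 1) (u + 1)) * h2
        rw [hstep, ih (u+1) (by omega)]
  by_cases hm' : a ≤ m
  · have := key (m - a) a (by omega)
    rwa [show s - a = b from by omega] at this
  · have hbm : b ≤ m := by omega
    have := key (m - b) b (by omega)
    rw [show s - b = a from by omega] at this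
    rw [hsym]; exact this

end
end Comb

lemma zodd_choose (n : ℕ) : ∀ u ≤ 2^n - 1, Odd ((2^n - 1).choose u) := by
  intro u
  induction u with
  | zero => intro _; simp
  | succ u ih =>
    intro hu
    have h1 : 1 ≤ 2^n := Nat.one_le_two_pow
    have hd : 2 ∣ (2^n).choose (u+1) :=
      Nat.Prime.dvd_choose_pow Nat.prime_two (by omega) (by omega)
    have hp : (2^n).choose (u+1) = (2^n-1).choose u + (2^n-1).choose (u+1) := by
      conv_lhs => rw [show (2:ℕ)^n = (2^n-1)+1 from by omega]
      rw [Nat.choose_succ_succ]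
    have hiu := ih (by omega)
    rw [Nat.odd_iff] at hiu ⊢
    omega

lemma zodd_cast {c : ℕ} (h : Odd c) : (c : K) = 1 := by
  obtain ⟨m, rfl⟩ := h
  push_cast
  rw [CharTwo.two_eq_zero]
  ring

def zEE (K : Type*) [Field K] (N : ℕ) : Fin N → Fin N → K := fun a j => if a = j then 1 else 0

variable (K) in
lemma zassBracket_EE (n : ℕ) (a b k : Fin (2^n-1)) :
    zassBracket K n (zEE K _ a) (zEE K _ b) k
      = if (a:ℕ) + (b:ℕ) = (k:ℕ) + 1 then (((k:ℕ)+1).choose (a:ℕ) : K) else 0 := by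
  unfold zassBracket zEE
  simp [mul_ite, ite_mul, mul_one, mul_zero, one_mul, zero_mul, Finset.sum_ite_eq]

variable (K) in
lemma zassBracket_EE' (n : ℕ) (a b : Fin (2^n-1)) :
    zassBracket K n (zEE K _ a) (zEE K _ b)
      = if h : 1 ≤ (a:ℕ)+(b:ℕ) ∧ (a:ℕ)+(b:ℕ) ≤ 2^n - 1 then
          ((((a:ℕ)+(b:ℕ)).choose (a:ℕ) : K)) •
            zEE K _ (⟨(a:ℕ)+(b:ℕ)-1, by omega⟩ : Fin (2^n-1)) else 0 := by
  funext k
  rw [zassBracket_EE]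
  have hk := k.isLt
  by_cases h : 1 ≤ (a:ℕ)+(b:ℕ) ∧ (a:ℕ)+(b:ℕ) ≤ 2^n - 1
  · rw [dif_pos h]
    by_cases hk1 : (a:ℕ)+(b:ℕ) = (k:ℕ)+1
    · rw [if_pos hk1]
      simp only [Pi.smul_apply, smul_eq_mul, zEE]
      have he : (⟨(a:ℕ)+(b:ℕ)-1, by omega⟩ : Fin (2^n-1)) = k := by
        apply Fin.ext
        show (a:ℕ)+(b:ℕ)-1 = (k:ℕ)
        omega
      rw [he, if_pos rfl, mul_one, hk1]
    · rw [if_neg hk1]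
      simp only [Pi.smul_apply, smul_eq_mul, zEE]
      rw [if_neg, mul_zero]
      intro hc
      have h3 : (a:ℕ)+(b:ℕ)-1 = (k:ℕ) := congrArg Fin.val hc
      omega
  · rw [dif_neg h, if_neg (by omega), Pi.zero_apply]

variable (K) in
lemma zassBracket_sum (n : ℕ) (x y : Fin (2^n-1) → K) :
    zassBracket K n x y
      = ∑ a : Fin (2^n-1), ∑ b : Fin (2^n-1),
          (x a * y b) • zassBracket K n (zEE K _ a) (zEE K _ b) := by
  funext k
  simp only [Finset.sum_apply, Pi.smul_apply, smul_eq_mul, zassBracket_EE]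
  simp only [zassBracket]
  refine Finset.sum_congr rfl fun a _ => Finset.sum_congr rfl fun b _ => ?_
  ring

variable (K) in
/-- the candidate 2-cochain on basis indices -/
def zF (n : ℕ) (f : (Fin (2^n-1) → K) →ₗ[K] (Fin (2^n-1) → K) →ₗ[K] K) : ℕ → ℕ → K :=
  fun a b => if h : a < 2^n-1 ∧ b < 2^n-1 then f (zEE K _ ⟨a, h.1⟩) (zEE K _ ⟨b, h.2⟩) else 0

variable (K) in
/-- value of the potential on basis elements -/
def zG (n : ℕ) (f : (Fin (2^n-1) → K) →ₗ[K] (Fin (2^n-1) → K) →ₗ[K] K) : ℕ → K :=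
  fun k => if k = 2^n-1-1 then zF K n f 1 (2^n-1-1) else zF K n f 0 (k+1)

variable (K) in
/-- the potential as a linear functional -/
def zg (n : ℕ) (f : (Fin (2^n-1) → K) →ₗ[K] (Fin (2^n-1) → K) →ₗ[K] K) :
    (Fin (2^n-1) → K) →ₗ[K] K where
  toFun v := ∑ k, v k * zG K n f (k : ℕ)
  map_add' u v := by simp [add_mul, Finset.sum_add_distrib]
  map_smul' c v := by simp [Finset.mul_sum, mul_assoc]

variable (K) in
lemma zg_EE (n : ℕ) (f : (Fin (2^n-1) → K) →ₗ[K] (Fin (2^n-1) → K) →ₗ[K] K)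
    (i : Fin (2^n-1)) : zg K n f (zEE K _ i) = zG K n f (i : ℕ) := by
  show (∑ k, zEE K _ i k * zG K n f (k : ℕ)) = zG K n f (i : ℕ)
  simp [zEE, ite_mul, one_mul, zero_mul, Finset.sum_ite_eq]

end ZassAux

/-- Over a field of characteristic 2 and for `n ≥ 2`, the second Chevalley–Eilenberg
cohomology of the Zassenhaus algebra `W₁′(n)` with trivial coefficients vanishes: every
alternating bilinear 2-cocycle `f : W × W → K` is a coboundary, i.e. of the form
`f (x, y) = g [x, y]` for some linear `g : W → K`. -/
theorem zassenhaus_H2_trivial (K : Type*) [Field K] [CharP K 2] (n : ℕ) (hn : 2 ≤ n)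
    (f : (Fin (2 ^ n - 1) → K) →ₗ[K] (Fin (2 ^ n - 1) → K) →ₗ[K] K)
    (halt : ∀ x, f x x = 0)
    (hcocycle : ∀ x y z : Fin (2 ^ n - 1) → K,
      f (zassBracket K n x y) z + f (zassBracket K n y z) x + f (zassBracket K n z x) y = 0) :
    ∃ g : (Fin (2 ^ n - 1) → K) →ₗ[K] K,
      ∀ x y : Fin (2 ^ n - 1) → K, f x y = g (zassBracket K n x y) := by
  have hN3 : 3 ≤ 2^n - 1 := by
    have : 2^2 ≤ 2^n := Nat.pow_le_pow_right (by norm_num) hn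
    omega
  have h2 : (2:K) = 0 := CharTwo.two_eq_zero
  have hfsym : ∀ x y, f x y = f y x := by
    intro x y
    have h0 := halt (x + y)
    simp only [map_add, LinearMap.add_apply, halt x, halt y, zero_add, add_zero] at h0
    linear_combination h0 - f y x * h2
  have hsym : ∀ a b, zF K n f a b = zF K n f b a := by
    intro a b
    unfold zF
    split_ifs with ha hb hb
    · exact hfsym _ _
    · exact absurd ⟨ha.2, ha.1⟩ hb
    · exact absurd ⟨hb.2, hb.1⟩ ha
    · rfl
  have hdiag : ∀ a, zF K n f a a = 0 := by
    intro a; unfold zF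
    split_ifs
    · exact halt _
    · rfl
  have hzN : ∀ a b, 2^n-1 ≤ b → zF K n f a b = 0 := by
    intro a b hb; unfold zF; rw [dif_neg (by omega)]
  have hbrf : ∀ (x y z : Fin (2^n-1)),
      f (zassBracket K n (zEE K _ x) (zEE K _ y)) (zEE K _ z)
        = zT (2^n-1) (zF K n f) (x:ℕ) (y:ℕ) (z:ℕ) := by
    intro x y z
    rw [zassBracket_EE']
    unfold zT
    split_ifs with h
    · simp only [map_smul, LinearMap.smul_apply, smul_eq_mul]
      congr 1
      unfold zF
      rw [dif_pos ⟨by omega, z.isLt⟩]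
    · simp only [map_zero, LinearMap.zero_apply]
  have hcoc : ∀ a b c, a < 2^n-1 → b < 2^n-1 → c < 2^n-1 →
      zT (2^n-1) (zF K n f) a b c + zT (2^n-1) (zF K n f) b c a
        + zT (2^n-1) (zF K n f) c a b = 0 := by
    intro a b c ha hb hc
    have H := hcocycle (zEE K _ ⟨a,ha⟩) (zEE K _ ⟨b,hb⟩) (zEE K _ ⟨c,hc⟩)
    rw [hbrf, hbrf, hbrf] at H
    exact H
  refine ⟨zg K n f, ?_⟩
  have key : ∀ a b : Fin (2^n-1),
      f (zEE K _ a) (zEE K _ b) = zg K n f (zassBracket K n (zEE K _ a) (zEE K _ b)) := by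
    intro a b
    have hfE : f (zEE K _ a) (zEE K _ b) = zF K n f (a:ℕ) (b:ℕ) := by
      unfold zF; rw [dif_pos ⟨a.isLt, b.isLt⟩]
    rw [zassBracket_EE']
    split_ifs with h
    · rw [map_smul, smul_eq_mul, zg_EE]
      simp only [zval]
      rw [hfE]
      rcases Nat.lt_or_ge ((a:ℕ)+(b:ℕ)) (2^n-1) with hs | hs
      · have hGz : zG K n f ((a:ℕ)+(b:ℕ)-1) = zF K n f 0 ((a:ℕ)+(b:ℕ)) := by
          unfold zG; rw [if_neg (by omega)]
          congr 1; omega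
        rw [hGz]
        have hA := zlemA hsym hcoc ((a:ℕ)+(b:ℕ)) hs (a:ℕ) (by omega)
        rw [show (a:ℕ)+(b:ℕ) - (a:ℕ) = (b:ℕ) from by omega] at hA
        rw [hA, hsym ((a:ℕ)+(b:ℕ)) 0]
      · have hb := b.isLt
        have hsN : (a:ℕ)+(b:ℕ) = 2^n-1 := by omega
        have hGz : zG K n f ((a:ℕ)+(b:ℕ)-1) = zF K n f 1 (2^n-1-1) := by
          unfold zG; rw [if_pos (by omega)]
        rw [hGz]
        have hB := zlemB hsym hcoc (a:ℕ) (by omega) a.isLt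
        rw [show 2^n-1 - (a:ℕ) = (b:ℕ) from by omega] at hB
        rw [hB, hsN, zodd_cast (zodd_choose n (a:ℕ) (by omega)), one_mul]
    · rw [map_zero, hfE]
      rcases Nat.eq_zero_or_pos ((a:ℕ)+(b:ℕ)) with h0 | h1
      · have ha0 : (a:ℕ) = 0 := by omega
        have hb0 : (b:ℕ) = 0 := by omega
        rw [ha0, hb0]; exact hdiag 0
      · have hgt : 2^n-1 < (a:ℕ)+(b:ℕ) := by omega
        rcases Nat.even_or_odd ((a:ℕ)+(b:ℕ)) with he | ho
        · exact zlemDeven hsym hdiag hzN hcoc _ hgt he _ _ rfl a.isLt b.isLt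
        · exact zlemCodd hsym hcoc _ _ a.isLt b.isLt hgt ho
  intro x y
  have hx : x = ∑ i, x i • zEE K (2^n-1) i := pi_eq_sum_univ x
  have hy : y = ∑ i, y i • zEE K (2^n-1) i := pi_eq_sum_univ y
  conv_lhs => rw [hx, hy]
  rw [zassBracket_sum]
  simp only [map_sum, map_smul, LinearMap.sum_apply, LinearMap.smul_apply, smul_eq_mul]
  simp only [Finset.mul_sum]
  rw [Finset.sum_comm]
  refine Finset.sum_congr rfl fun a _ => Finset.sum_congr rfl fun b _ => ?_
  rw [key a b]
  ring
end
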